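/- arXiv:2002.06795 — 6 statements merged into one kernel-verified Lean document; each statement's English description precedes it below -/
import Mathlib

section
/- Let p be a prime with p ≡ 5 (mod 6) and p > 11. Then every vertex of the graph G_p has degree at least (p − 11)/6. -/
open SimpleGraph

/-- The set `S ⊆ 𝔽_p` of residues of the integers `1, …, (p-5)/6`. -/
def Sset (p : ℕ) : Finset (ZMod p) :=
  (Finset.Icc 1 ((p - 5) / 6)).image (fun k : ℕ => (k : ZMod p))

/-- The vertex set `V = S × 𝔽_p × 𝔽_p`. -/
abbrev Vert (p : ℕ) : Type := {v : ZMod p × ZMod p × ZMod p // v.1 ∈ Sset p}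

/-- The graph `G_p`: distinct vertices `x = (x₁,x₂,x₃)` and `y = (y₁,y₂,y₃)` are adjacent
iff `x₂ + y₃ = x₁y₁²` and `x₃ + y₂ = x₁²y₁`. -/
def Gp (p : ℕ) : SimpleGraph (Vert p) where
  Adj x y := x ≠ y ∧
    x.val.2.1 + y.val.2.2 = x.val.1 * y.val.1 ^ 2 ∧
    x.val.2.2 + y.val.2.1 = x.val.1 ^ 2 * y.val.1
  symm := ⟨by
    rintro x y ⟨hne, h1, h2⟩
    exact ⟨hne.symm, by linear_combination h2, by linear_combination h1⟩⟩
  loopless := ⟨fun x h => h.1 rfl⟩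

instance (p : ℕ) : DecidableRel (Gp p).Adj := fun x y =>
  decidable_of_iff (x ≠ y ∧
    x.val.2.1 + y.val.2.2 = x.val.1 * y.val.1 ^ 2 ∧
    x.val.2.2 + y.val.2.1 = x.val.1 ^ 2 * y.val.1) Iff.rfl

/-! Given a vertex `v = (a, v₂, v₃)` and any `b ∈ S` with `b ≠ a`, the adjacency equations are
solved by `(b, a²b - v₃, ab² - v₂)`, so `v` has a neighbour over every such `b`, and
`deg v ≥ |S| - 1 = (p - 5)/6 - 1 = (p - 11)/6`. -/

open Finset

theorem card_Sset (p : ℕ) : #(Sset p) = (p - 5) / 6 := by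
  rw [Sset, card_image_of_injOn, Nat.card_Icc, Nat.add_sub_cancel]
  intro x hx y hy hxy
  simp only [coe_Icc, Set.mem_Icc] at hx hy
  rw [ZMod.natCast_eq_natCast_iff', Nat.mod_eq_of_lt (by omega), Nat.mod_eq_of_lt (by omega)] at hxy
  exact hxy

namespace Gp

variable {p : ℕ}

def partner (v : Vert p) (b : ZMod p) (hb : b ∈ Sset p) : Vert p :=
  ⟨(b, v.val.1 ^ 2 * b - v.val.2.2, v.val.1 * b ^ 2 - v.val.2.1), hb⟩

theorem adj_partner (v : Vert p) {b : ZMod p} (hb : b ∈ Sset p) (hne : b ≠ v.val.1) :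
    (Gp p).Adj v (partner v b hb) :=
  ⟨fun h => hne (congrArg (fun w : Vert p => w.val.1) h).symm, by simp [partner], by
    simp [partner]⟩

theorem erase_subset_image_neighborFinset [NeZero p] (v : Vert p) :
    (Sset p).erase v.val.1 ⊆ ((Gp p).neighborFinset v).image (fun w => w.val.1) := by
  intro b hb
  obtain ⟨hne, hS⟩ := mem_erase.mp hb
  exact mem_image.mpr ⟨partner v b hS, (mem_neighborFinset _ _ _).mpr (adj_partner v hS hne), rfl⟩

end Gp

theorem Gp_degree_lower_general (p : ℕ) [Fact p.Prime]
    (v : Vert p) : (p - 11) / 6 ≤ (Gp p).degree v := by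
  calc (p - 11) / 6 = #(Sset p) - 1 := by rw [card_Sset]; omega
    _ ≤ #((Sset p).erase v.val.1) := pred_card_le_card_erase
    _ ≤ #(((Gp p).neighborFinset v).image (fun w => w.val.1)) :=
      card_le_card (Gp.erase_subset_image_neighborFinset v)
    _ ≤ #((Gp p).neighborFinset v) := card_image_le
    _ = (Gp p).degree v := card_neighborFinset_eq_degree _ _

/-- Every vertex of `G_p` has degree at least `(p - 11)/6`. -/
theorem Gp_degree_lower (p : ℕ) [Fact p.Prime] (h5 : p % 6 = 5) (h11 : 11 < p)
    (v : Vert p) : (p - 11) / 6 ≤ (Gp p).degree v :=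
  Gp_degree_lower_general p v
end

section
/- Let p be a prime with p ≡ 5 (mod 6) and p > 11. If x = (x₁,x₂,x₃) and y = (y₁,y₂,y₃) are distinct vertices of G_p that have a common neighbor, then x₁ ≠ y₁, x₂ ≠ y₂, and x₃ ≠ y₃. -/
open SimpleGraph

/-!
If `u` is a common neighbor of `x` and `y`, subtracting the adjacency equations gives
`x₂ - y₂ = (x₁ - y₁) u₁²` and `x₃ - y₃ = (x₁ - y₁)(x₁ + y₁) u₁`. So `x₁ = y₁` would force `x = y`,
and since the elements of `S` are residues of integers in `[1, (p-5)/6]`, neither `u₁` nor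
`x₁ + y₁` vanishes in `𝔽_p`; hence `x₁ ≠ y₁` propagates to the other two coordinates.
-/

lemma natCast_ne_zero_of_pos_of_lt {p k : ℕ} (hk : 0 < k) (hkp : k < p) : (k : ZMod p) ≠ 0 := by
  rw [Ne, ZMod.natCast_eq_zero_iff]
  exact fun hdvd => (Nat.le_of_dvd hk hdvd).not_gt hkp

lemma exists_natCast_of_mem_Sset {p : ℕ} {a : ZMod p} (ha : a ∈ Sset p) :
    ∃ k : ℕ, 0 < k ∧ 6 * k + 5 ≤ p ∧ a = k := by
  obtain ⟨k, hk, rfl⟩ := Finset.mem_image.mp ha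
  rw [Finset.mem_Icc] at hk
  exact ⟨k, hk.1, by omega, rfl⟩

lemma ne_zero_of_mem_Sset {p : ℕ} {a : ZMod p} (ha : a ∈ Sset p) : a ≠ 0 := by
  obtain ⟨k, hk, hkp, rfl⟩ := exists_natCast_of_mem_Sset ha
  exact natCast_ne_zero_of_pos_of_lt hk (by omega)

lemma add_ne_zero_of_mem_Sset {p : ℕ} {a b : ZMod p} (ha : a ∈ Sset p) (hb : b ∈ Sset p) :
    a + b ≠ 0 := by
  obtain ⟨k, hk, hkp, rfl⟩ := exists_natCast_of_mem_Sset ha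
  obtain ⟨l, -, hlp, rfl⟩ := exists_natCast_of_mem_Sset hb
  exact_mod_cast natCast_ne_zero_of_pos_of_lt (Nat.add_pos_left hk l) (by omega)

namespace Gp

variable {p : ℕ} {x y u : Vert p}

lemma snd_fst_sub_eq_of_adj (hx : (Gp p).Adj x u) (hy : (Gp p).Adj y u) :
    x.val.2.1 - y.val.2.1 = (x.val.1 - y.val.1) * u.val.1 ^ 2 := by
  linear_combination hx.2.1 - hy.2.1

lemma snd_snd_sub_eq_of_adj (hx : (Gp p).Adj x u) (hy : (Gp p).Adj y u) :
    x.val.2.2 - y.val.2.2 = (x.val.1 - y.val.1) * ((x.val.1 + y.val.1) * u.val.1) := by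
  linear_combination hx.2.2 - hy.2.2

lemma eq_of_fst_eq_of_adj (hx : (Gp p).Adj x u) (hy : (Gp p).Adj y u)
    (h : x.val.1 = y.val.1) : x = y := by
  have h₂ := snd_fst_sub_eq_of_adj hx hy
  have h₃ := snd_snd_sub_eq_of_adj hx hy
  rw [h, sub_self, zero_mul, sub_eq_zero] at h₂ h₃
  exact Subtype.ext (Prod.ext h (Prod.ext h₂ h₃))

end Gp

theorem Gp_common_neighbor_coords_general (p : ℕ) [Fact p.Prime]
    (x y : Vert p) (hxy : x ≠ y)
    (h : ∃ u : Vert p, (Gp p).Adj x u ∧ (Gp p).Adj y u) :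
    x.val.1 ≠ y.val.1 ∧ x.val.2.1 ≠ y.val.2.1 ∧ x.val.2.2 ≠ y.val.2.2 := by
  obtain ⟨u, hx, hy⟩ := h
  have h₁ : x.val.1 - y.val.1 ≠ 0 :=
    sub_ne_zero.mpr fun h => hxy (Gp.eq_of_fst_eq_of_adj hx hy h)
  have hu : u.val.1 ≠ 0 := ne_zero_of_mem_Sset u.property
  refine ⟨sub_ne_zero.mp h₁, sub_ne_zero.mp ?_, sub_ne_zero.mp ?_⟩
  · rw [Gp.snd_fst_sub_eq_of_adj hx hy]
    exact mul_ne_zero h₁ (pow_ne_zero 2 hu)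
  · rw [Gp.snd_snd_sub_eq_of_adj hx hy]
    exact mul_ne_zero h₁ (mul_ne_zero (add_ne_zero_of_mem_Sset x.property y.property) hu)

/-- Distinct vertices of `G_p` with a common neighbor differ in every coordinate. -/
theorem Gp_common_neighbor_coords (p : ℕ) [Fact p.Prime] (h5 : p % 6 = 5) (h11 : 11 < p)
    (x y : Vert p) (hxy : x ≠ y)
    (h : ∃ u : Vert p, (Gp p).Adj x u ∧ (Gp p).Adj y u) :
    x.val.1 ≠ y.val.1 ∧ x.val.2.1 ≠ y.val.2.1 ∧ x.val.2.2 ≠ y.val.2.2 :=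
  Gp_common_neighbor_coords_general p x y hxy h
end

section
/- Let p be a prime with p ≡ 5 (mod 6) and p > 11. Let a = (a₁,a₂,a₃) and b = (b₁,b₂,b₃) be distinct vertices of G_p with a₁ = b₁, and suppose there exist vertices x, y, w of G_p with w ≠ a and w ≠ b such that ax, by, wx, and wy are all edges of G_p. Then a₂ ≠ b₂ and a₃ ≠ b₃. -/
open SimpleGraph

/-!
Two vertices `u, v` with a common neighbour `x` satisfy `u₂ - v₂ = (u₁ - v₁) x₁²` and
`u₃ - v₃ = (u₁² - v₁²) x₁`, since subtracting the adjacency equations eliminates `x₂, x₃`.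
Apply this to `a, w` through `x` and to `b, w` through `y`: as `a₁ = b₁`, the equality `a₂ = b₂`
forces `x₁² = y₁²` and `a₃ = b₃` forces `x₁ = y₁`, while `x₁ = y₁` forces `a = b`. The
cancellations need `a₁ ≠ w₁` (otherwise `w = a`) and `s + t ≠ 0` for `s, t ∈ S`, which holds
because the representatives of `S` are so small that their sums lie strictly between `0` and `p`.
-/

lemma Sset_add_ne_zero {p : ℕ} {s t : ZMod p} (hs : s ∈ Sset p) (ht : t ∈ Sset p) :
    s + t ≠ 0 := by
  simp only [Sset, Finset.mem_image, Finset.mem_Icc] at hs ht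
  obtain ⟨k, ⟨hk1, hk2⟩, rfl⟩ := hs
  obtain ⟨l, ⟨hl1, hl2⟩, rfl⟩ := ht
  rw [← Nat.cast_add, Ne, ZMod.natCast_eq_zero_iff]
  intro hdvd
  have hle := Nat.le_of_dvd (by omega) hdvd
  have := Nat.div_mul_le_self (p - 5) 6
  omega

lemma Vert.ext {p : ℕ} {a b : Vert p} (h1 : a.val.1 = b.val.1) (h2 : a.val.2.1 = b.val.2.1)
    (h3 : a.val.2.2 = b.val.2.2) : a = b :=
  Subtype.ext (Prod.ext h1 (Prod.ext h2 h3))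

namespace Gp

variable {p : ℕ} {a b u v w x y : Vert p}

lemma snd_sub_snd_of_adj (hu : (Gp p).Adj u x) (hv : (Gp p).Adj v x) :
    u.val.2.1 - v.val.2.1 = (u.val.1 - v.val.1) * x.val.1 ^ 2 := by
  linear_combination hu.2.1 - hv.2.1

lemma thd_sub_thd_of_adj (hu : (Gp p).Adj u x) (hv : (Gp p).Adj v x) :
    u.val.2.2 - v.val.2.2 = (u.val.1 - v.val.1) * (u.val.1 + v.val.1) * x.val.1 := by
  linear_combination hu.2.2 - hv.2.2

lemma eq_of_adj_of_fst_eq (hu : (Gp p).Adj u x) (hv : (Gp p).Adj v x)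
    (h1 : u.val.1 = v.val.1) : u = v := by
  have h2 := snd_sub_snd_of_adj hu hv
  have h3 := thd_sub_thd_of_adj hu hv
  rw [h1, sub_self, zero_mul, sub_eq_zero] at h2
  rw [h1, sub_self, zero_mul, zero_mul, sub_eq_zero] at h3
  exact Vert.ext h1 h2 h3

lemma fst_ne_of_adj_of_ne (hu : (Gp p).Adj u x) (hv : (Gp p).Adj v x) (huv : u ≠ v) :
    u.val.1 ≠ v.val.1 :=
  fun h1 => huv (eq_of_adj_of_fst_eq hu hv h1)

section CommonNeighbour

variable (hax : (Gp p).Adj a x) (hby : (Gp p).Adj b y) (hwx : (Gp p).Adj w x)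
  (hwy : (Gp p).Adj w y) (h1 : a.val.1 = b.val.1)
include hax hby hwx hwy h1

lemma eq_of_adj_of_adj_of_fst_eq (hxy : x.val.1 = y.val.1) : a = b := by
  have h2 : a.val.2.1 - w.val.2.1 = b.val.2.1 - w.val.2.1 := by
    rw [snd_sub_snd_of_adj hax hwx, snd_sub_snd_of_adj hby hwy, h1, hxy]
  have h3 : a.val.2.2 - w.val.2.2 = b.val.2.2 - w.val.2.2 := by
    rw [thd_sub_thd_of_adj hax hwx, thd_sub_thd_of_adj hby hwy, h1, hxy]
  exact Vert.ext h1 (sub_left_injective h2) (sub_left_injective h3)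

variable [Fact p.Prime] (hwa : w ≠ a)
include hwa

lemma fst_eq_of_snd_eq (h2 : a.val.2.1 = b.val.2.1) : x.val.1 = y.val.1 := by
  have hne : a.val.1 - w.val.1 ≠ 0 := sub_ne_zero.2 (fst_ne_of_adj_of_ne hax hwx hwa.symm)
  have hsq : (a.val.1 - w.val.1) * x.val.1 ^ 2 = (a.val.1 - w.val.1) * y.val.1 ^ 2 := by
    rw [← snd_sub_snd_of_adj hax hwx, h1, ← snd_sub_snd_of_adj hby hwy, h2]
  rcases sq_eq_sq_iff_eq_or_eq_neg.1 (mul_left_cancel₀ hne hsq) with h | h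
  · exact h
  · exact absurd (eq_neg_iff_add_eq_zero.1 h) (Sset_add_ne_zero x.2 y.2)

lemma fst_eq_of_thd_eq (h3 : a.val.2.2 = b.val.2.2) : x.val.1 = y.val.1 := by
  have hne : (a.val.1 - w.val.1) * (a.val.1 + w.val.1) ≠ 0 :=
    mul_ne_zero (sub_ne_zero.2 (fst_ne_of_adj_of_ne hax hwx hwa.symm)) (Sset_add_ne_zero a.2 w.2)
  refine mul_left_cancel₀ hne ?_
  rw [← thd_sub_thd_of_adj hax hwx, h1, ← thd_sub_thd_of_adj hby hwy, h3]

end CommonNeighbour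

end Gp

theorem Gp_same_first_coord_general (p : ℕ) [Fact p.Prime]
    (a b : Vert p) (hab : a ≠ b) (h1 : a.val.1 = b.val.1)
    (h : ∃ x y w : Vert p, w ≠ a ∧ w ≠ b ∧
      (Gp p).Adj a x ∧ (Gp p).Adj b y ∧ (Gp p).Adj w x ∧ (Gp p).Adj w y) :
    a.val.2.1 ≠ b.val.2.1 ∧ a.val.2.2 ≠ b.val.2.2 := by
  obtain ⟨x, y, w, hwa, -, hax, hby, hwx, hwy⟩ := h
  have hxy : x.val.1 ≠ y.val.1 :=
    fun hxy => hab (Gp.eq_of_adj_of_adj_of_fst_eq hax hby hwx hwy h1 hxy)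
  exact ⟨fun h2 => hxy (Gp.fst_eq_of_snd_eq hax hby hwx hwy h1 hwa h2),
    fun h3 => hxy (Gp.fst_eq_of_thd_eq hax hby hwx hwy h1 hwa h3)⟩

/-- If `a ≠ b`, `a₁ = b₁`, and there are vertices `x, y, w` with `w ≠ a`, `w ≠ b` such that
`ax, by, wx, wy` are edges of `G_p`, then `a₂ ≠ b₂` and `a₃ ≠ b₃`. -/
theorem Gp_same_first_coord (p : ℕ) [Fact p.Prime] (h5 : p % 6 = 5) (h11 : 11 < p)
    (a b : Vert p) (hab : a ≠ b) (h1 : a.val.1 = b.val.1)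
    (h : ∃ x y w : Vert p, w ≠ a ∧ w ≠ b ∧
      (Gp p).Adj a x ∧ (Gp p).Adj b y ∧ (Gp p).Adj w x ∧ (Gp p).Adj w y) :
    a.val.2.1 ≠ b.val.2.1 ∧ a.val.2.2 ≠ b.val.2.2 :=
  Gp_same_first_coord_general p a b hab h1 h
end

section
/- Let p be a prime with p ≡ 5 (mod 6) and p > 11. Let a = (a₁,a₂,a₃), b = (b₁,b₂,b₃), c = (c₁,c₂,c₃) be pairwise distinct vertices of G_p with a₁ = b₁ = c₁. Then the number of quadruples (x, y, z, w) of pairwise distinct vertices of G_p such that ax, xw, by, yw, cz, zw are all edges of G_p is at most 3. -/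
open SimpleGraph

/-- The set of quadruples `(x, y, z, w)` of pairwise distinct vertices of `G_p` such that
`ax, xw, by, yw, cz, zw` are all edges of `G_p`. -/
def QuadSet (p : ℕ) (a b c : Vert p) : Set (Vert p × Vert p × Vert p × Vert p) :=
  {q | q.1 ≠ q.2.1 ∧ q.1 ≠ q.2.2.1 ∧ q.1 ≠ q.2.2.2 ∧
       q.2.1 ≠ q.2.2.1 ∧ q.2.1 ≠ q.2.2.2 ∧ q.2.2.1 ≠ q.2.2.2 ∧
       (Gp p).Adj a q.1 ∧ (Gp p).Adj q.1 q.2.2.2 ∧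
       (Gp p).Adj b q.2.1 ∧ (Gp p).Adj q.2.1 q.2.2.2 ∧
       (Gp p).Adj c q.2.2.1 ∧ (Gp p).Adj q.2.2.1 q.2.2.2}

/-!
Write `α` for the common first coordinate of `a, b, c` and `t, u, s, m` for the first coordinates
of `x, y, z, w`. Along a path `a — x — w` the last two coordinates of `w` are
`a₂ + t²(m - α)` and `a₃ + t(m² - α²)`, so the three paths ending at `w` give
`(b₂ - a₂, b₃ - a₃) = ((t² - u²)(m - α), (t - u)(m² - α²))`, and the same for `c` with `s`.
Since `m + α ≠ 0` for first coordinates taken from `S`, these equations force `m² ≠ α²`,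
determine `t` linearly in terms of `m`, and, after eliminating `t`, show that `m` is a root of the
cubic `D (X + α)² (X - α) - (b₃ - a₃)(c₃ - a₃)(c₃ - b₃)`, where
`D = (b₂ - a₂)(c₃ - a₃) - (c₂ - a₂)(b₃ - a₃)` is nonzero because `a, b, c` are distinct.
A neighbour of a vertex is determined by its first coordinate, so `t, u, s` and then
`x, y, z, w` are determined by `m`: there are at most three quadruples.
-/

section PathEnd

variable {R : Type*} [CommRing R]

/-- The last two coordinates of `w` on a path `(α, a) — (t, _) — (m, w)` of the graph. -/
def pathEnd (α m : R) (a : R × R) (t : R) : R × R :=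
  (a.1 + t ^ 2 * (m - α), a.2 + t * (m ^ 2 - α ^ 2))

variable {α m t u s t' u' : R} {a b c : R × R}

lemma pathEnd_eq_pathEnd_iff :
    pathEnd α m a t = pathEnd α m b u ↔
      b.1 - a.1 = (t ^ 2 - u ^ 2) * (m - α) ∧ b.2 - a.2 = (t - u) * (m ^ 2 - α ^ 2) := by
  simp only [pathEnd, Prod.ext_iff]
  constructor <;> rintro ⟨h₁, h₂⟩ <;> exact ⟨by linear_combination -h₁, by linear_combination -h₂⟩

lemma two_mul_mul_eq_of_pathEnd_eq (h : pathEnd α m a t = pathEnd α m b u) :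
    2 * t * (b.2 - a.2) * (m ^ 2 - α ^ 2) =
      (b.1 - a.1) * (m + α) * (m ^ 2 - α ^ 2) + (b.2 - a.2) ^ 2 := by
  obtain ⟨h₁, h₂⟩ := pathEnd_eq_pathEnd_iff.mp h
  linear_combination
    -(m + α) * (m ^ 2 - α ^ 2) * h₁ + ((t + u) * (m ^ 2 - α ^ 2) - (b.2 - a.2)) * h₂

lemma det_mul_eq_of_pathEnd_eq (hb : pathEnd α m a t = pathEnd α m b u)
    (hc : pathEnd α m a t = pathEnd α m c s) :
    ((b.1 - a.1) * (c.2 - a.2) - (c.1 - a.1) * (b.2 - a.2)) * (m + α) ^ 2 * (m - α) =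
      (b.2 - a.2) * (c.2 - a.2) * (c.2 - b.2) := by
  linear_combination (b.2 - a.2) * two_mul_mul_eq_of_pathEnd_eq hc -
    (c.2 - a.2) * two_mul_mul_eq_of_pathEnd_eq hb

variable [IsDomain R]

lemma sq_sub_sq_ne_zero_of_pathEnd_eq (hσ : m + α ≠ 0) (hab : a ≠ b)
    (h : pathEnd α m a t = pathEnd α m b u) : m ^ 2 - α ^ 2 ≠ 0 := by
  obtain ⟨h₁, h₂⟩ := pathEnd_eq_pathEnd_iff.mp h
  intro hK
  have hk : m - α = 0 :=
    (mul_eq_zero.mp (by linear_combination hK : (m + α) * (m - α) = 0)).resolve_left hσ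
  exact hab (Prod.ext (by linear_combination -h₁ - (t ^ 2 - u ^ 2) * hk)
    (by linear_combination -h₂ - (t - u) * hK))

lemma snd_ne_snd_of_pathEnd_eq (hσ : m + α ≠ 0) (hab : a ≠ b)
    (h : pathEnd α m a t = pathEnd α m b u) : a.2 ≠ b.2 := by
  have hK := sq_sub_sq_ne_zero_of_pathEnd_eq hσ hab h
  obtain ⟨h₁, h₂⟩ := pathEnd_eq_pathEnd_iff.mp h
  intro h₃
  have htu : t - u = 0 := by
    refine (mul_eq_zero.mp ?_).resolve_right hK
    linear_combination -h₂ - h₃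
  exact hab (Prod.ext (by linear_combination -h₁ - (t + u) * (m - α) * htu) h₃)

lemma eq_and_eq_of_pathEnd_eq (hσ : m + α ≠ 0) (hab : a ≠ b) (h2 : (2 : R) ≠ 0)
    (h : pathEnd α m a t = pathEnd α m b u) (h' : pathEnd α m a t' = pathEnd α m b u') :
    t = t' ∧ u = u' := by
  have hK := sq_sub_sq_ne_zero_of_pathEnd_eq hσ hab h
  have hB : b.2 - a.2 ≠ 0 := sub_ne_zero.mpr (snd_ne_snd_of_pathEnd_eq hσ hab h).symm
  have ht : t = t' := mul_left_cancel₀ (mul_ne_zero (mul_ne_zero h2 hB) hK) <| by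
    linear_combination two_mul_mul_eq_of_pathEnd_eq h - two_mul_mul_eq_of_pathEnd_eq h'
  subst ht
  refine ⟨rfl, mul_right_cancel₀ hK ?_⟩
  linear_combination (pathEnd_eq_pathEnd_iff.mp h).2 - (pathEnd_eq_pathEnd_iff.mp h').2

lemma det_ne_zero_of_pathEnd_eq (hσ : m + α ≠ 0) (hab : a ≠ b) (hac : a ≠ c) (hbc : b ≠ c)
    (hb : pathEnd α m a t = pathEnd α m b u) (hc : pathEnd α m a t = pathEnd α m c s) :
    (b.1 - a.1) * (c.2 - a.2) - (c.1 - a.1) * (b.2 - a.2) ≠ 0 := by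
  have hB : b.2 - a.2 ≠ 0 := sub_ne_zero.mpr (snd_ne_snd_of_pathEnd_eq hσ hab hb).symm
  have hC : c.2 - a.2 ≠ 0 := sub_ne_zero.mpr (snd_ne_snd_of_pathEnd_eq hσ hac hc).symm
  intro hD
  have hE := det_mul_eq_of_pathEnd_eq hb hc
  rw [hD, zero_mul, zero_mul, eq_comm] at hE
  have h₂ : c.2 = b.2 := sub_eq_zero.mp ((mul_eq_zero.mp hE).resolve_left (mul_ne_zero hB hC))
  rw [h₂, ← sub_mul, mul_eq_zero] at hD
  exact hbc (Prod.ext (by linear_combination hD.resolve_right hB) h₂.symm)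

end PathEnd

lemma ncard_setOf_mul_sq_mul_eq_le_three {R : Type*} [CommRing R] [IsDomain R] {D α E : R}
    (hD : D ≠ 0) : {m : R | D * (m + α) ^ 2 * (m - α) = E}.ncard ≤ 3 := by
  classical
  let P : Cubic R := ⟨D, D * α, -(D * α ^ 2), -(D * α ^ 3) - E⟩
  calc {m : R | D * (m + α) ^ 2 * (m - α) = E}.ncard
      ≤ (P.roots.toFinset : Set R).ncard := by
        refine Set.ncard_le_ncard (fun m (hm : D * (m + α) ^ 2 * (m - α) = E) => ?_)
          (Finset.finite_toSet _)
        rw [Finset.mem_coe, Multiset.mem_toFinset,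
          Cubic.mem_roots_iff (Cubic.ne_zero_of_a_ne_zero hD)]
        dsimp only [P]
        linear_combination hm
    _ = P.roots.toFinset.card := Set.ncard_coe_finset _
    _ ≤ 3 := P.card_roots_le

lemma Sset_add_ne_zero_s10 {p : ℕ} {v w : ZMod p} (hv : v ∈ Sset p) (hw : w ∈ Sset p) :
    v + w ≠ 0 := by
  simp only [Sset, Finset.mem_image, Finset.mem_Icc] at hv hw
  obtain ⟨k, ⟨hk1, hk2⟩, rfl⟩ := hv
  obtain ⟨l, ⟨hl1, hl2⟩, rfl⟩ := hw
  rw [← Nat.cast_add, Ne, ZMod.natCast_eq_zero_iff]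
  intro hdvd
  have := Nat.le_of_dvd (by omega) hdvd
  omega

lemma snd_ne_snd_of_fst_eq {p : ℕ} {v w : Vert p} (h : v.val.1 = w.val.1) (hvw : v ≠ w) :
    v.val.2 ≠ w.val.2 :=
  fun h₂ => hvw (Subtype.ext (Prod.ext h h₂))

namespace Gp

variable {p : ℕ} {a x y w : Vert p}

lemma eq_of_adj_of_fst_eq_s10 (hx : (Gp p).Adj a x) (hy : (Gp p).Adj a y) (h : x.val.1 = y.val.1) :
    x = y := by
  obtain ⟨-, hx₁, hx₂⟩ := hx
  obtain ⟨-, hy₁, hy₂⟩ := hy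
  rw [h] at hx₁ hx₂
  exact Subtype.ext (Prod.ext h (Prod.ext (by linear_combination hx₂ - hy₂)
    (by linear_combination hx₁ - hy₁)))

lemma snd_eq_pathEnd (hax : (Gp p).Adj a x) (hxw : (Gp p).Adj x w) :
    w.val.2 = pathEnd a.val.1 w.val.1 a.val.2 x.val.1 := by
  obtain ⟨-, hax₁, hax₂⟩ := hax
  obtain ⟨-, hxw₁, hxw₂⟩ := hxw
  exact Prod.ext (by simp only [pathEnd]; linear_combination hxw₂ - hax₁)
    (by simp only [pathEnd]; linear_combination hxw₁ - hax₂)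

end Gp

section QuadSet

variable {p : ℕ} {a b c : Vert p}

lemma pathEnd_eq_of_mem_QuadSet (h1 : a.val.1 = b.val.1) (h1' : b.val.1 = c.val.1)
    {q : Vert p × Vert p × Vert p × Vert p} (hq : q ∈ QuadSet p a b c) :
    pathEnd a.val.1 q.2.2.2.val.1 a.val.2 q.1.val.1 =
        pathEnd a.val.1 q.2.2.2.val.1 b.val.2 q.2.1.val.1 ∧
      pathEnd a.val.1 q.2.2.2.val.1 a.val.2 q.1.val.1 =
        pathEnd a.val.1 q.2.2.2.val.1 c.val.2 q.2.2.1.val.1 := by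
  obtain ⟨-, -, -, -, -, -, hax, hxw, hby, hyw, hcz, hzw⟩ := hq
  rw [← Gp.snd_eq_pathEnd hax hxw, h1, ← Gp.snd_eq_pathEnd hby hyw, h1',
    ← Gp.snd_eq_pathEnd hcz hzw]
  exact ⟨rfl, rfl⟩

variable [Fact p.Prime]

lemma injOn_QuadSet (hab : a ≠ b) (hac : a ≠ c)
    (h1 : a.val.1 = b.val.1) (h1' : b.val.1 = c.val.1) :
    (QuadSet p a b c).InjOn fun q : Vert p × Vert p × Vert p × Vert p => q.2.2.2.val.1 := by
  rintro ⟨x, y, z, w⟩ hq ⟨x', y', z', w'⟩ hq' (hm : w.val.1 = w'.val.1)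
  have hσ : w.val.1 + a.val.1 ≠ 0 := Sset_add_ne_zero_s10 w.prop a.prop
  have h2 : (2 : ZMod p) ≠ 0 :=
    left_ne_zero_of_mul (two_mul a.val.1 ▸ Sset_add_ne_zero_s10 a.prop a.prop)
  have hab₂ := snd_ne_snd_of_fst_eq h1 hab
  have hac₂ := snd_ne_snd_of_fst_eq (h1.trans h1') hac
  obtain ⟨hb, hc⟩ := pathEnd_eq_of_mem_QuadSet h1 h1' hq
  obtain ⟨hb', hc'⟩ := pathEnd_eq_of_mem_QuadSet h1 h1' hq'
  rw [← hm] at hb' hc'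
  obtain ⟨ht, hu⟩ := eq_and_eq_of_pathEnd_eq hσ hab₂ h2 hb hb'
  obtain ⟨-, hs⟩ := eq_and_eq_of_pathEnd_eq hσ hac₂ h2 hc hc'
  obtain ⟨-, -, -, -, -, -, hax, hxw, hby, -, hcz, -⟩ := hq
  obtain ⟨-, -, -, -, -, -, hax', hxw', hby', -, hcz', -⟩ := hq'
  dsimp only at hax hxw hby hcz hax' hxw' hby' hcz'
  obtain rfl := Gp.eq_of_adj_of_fst_eq_s10 hax hax' ht
  rw [Gp.eq_of_adj_of_fst_eq_s10 hby hby' hu, Gp.eq_of_adj_of_fst_eq_s10 hcz hcz' hs,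
    Gp.eq_of_adj_of_fst_eq_s10 hxw hxw' hm]

end QuadSet

theorem Gp_quad_count_eq_first_all_general (p : ℕ) [Fact p.Prime]
    (a b c : Vert p) (hab : a ≠ b) (hac : a ≠ c) (hbc : b ≠ c)
    (h1 : a.val.1 = b.val.1) (h1' : b.val.1 = c.val.1) :
    (QuadSet p a b c).ncard ≤ 3 := by
  rcases (QuadSet p a b c).eq_empty_or_nonempty with hempty | ⟨q, hq⟩
  · simp [hempty]
  set α := a.val.1
  set D := (b.val.2.1 - a.val.2.1) * (c.val.2.2 - a.val.2.2) -
    (c.val.2.1 - a.val.2.1) * (b.val.2.2 - a.val.2.2)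
  have hD : D ≠ 0 := by
    obtain ⟨hb, hc⟩ := pathEnd_eq_of_mem_QuadSet h1 h1' hq
    exact det_ne_zero_of_pathEnd_eq (Sset_add_ne_zero_s10 q.2.2.2.prop a.prop)
      (snd_ne_snd_of_fst_eq h1 hab) (snd_ne_snd_of_fst_eq (h1.trans h1') hac)
      (snd_ne_snd_of_fst_eq h1' hbc) hb hc
  calc (QuadSet p a b c).ncard
      ≤ {m | D * (m + α) ^ 2 * (m - α) =
          (b.val.2.2 - a.val.2.2) * (c.val.2.2 - a.val.2.2) * (c.val.2.2 - b.val.2.2)}.ncard :=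
        Set.ncard_le_ncard_of_injOn _
          (fun q hq => det_mul_eq_of_pathEnd_eq (pathEnd_eq_of_mem_QuadSet h1 h1' hq).1
            (pathEnd_eq_of_mem_QuadSet h1 h1' hq).2)
          (injOn_QuadSet hab hac h1 h1')
    _ ≤ 3 := ncard_setOf_mul_sq_mul_eq_le_three hD

/-- If moreover `a₁ = b₁ = c₁`, there are at most 3 such quadruples. -/
theorem Gp_quad_count_eq_first_all (p : ℕ) [Fact p.Prime] (h5 : p % 6 = 5) (h11 : 11 < p)
    (a b c : Vert p) (hab : a ≠ b) (hac : a ≠ c) (hbc : b ≠ c)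
    (h1 : a.val.1 = b.val.1) (h1' : b.val.1 = c.val.1) :
    (QuadSet p a b c).ncard ≤ 3 :=
  Gp_quad_count_eq_first_all_general p a b c hab hac hbc h1 h1'
end

section
/- Let p be a prime with p ≡ 5 (mod 6) and p > 11. Suppose d, a, x, w, y, b are pairwise distinct vertices of G_p such that da, ax, xw, wy, yb, bd are all edges of G_p (so these vertices form a hexagon). Then, writing v = (v₁,v₂,v₃) for each vertex v, the following identity holds in 𝔽_p: d₁²a₁ + d₁²w₁ − d₁a₁x₁ − d₁a₁y₁ + d₁x₁w₁ + d₁w₁y₁ − a₁x₁² − a₁x₁y₁ − a₁y₁² + x₁²w₁ + x₁w₁y₁ − w₁y₁² = 0. -/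
open SimpleGraph

/-!
Going two steps along a path `u – c – v` of `G_p` changes the last two coordinates by
`c₁²(u₁ - v₁)` and `c₁(u₁² - v₁²)`. Summing these around the triangle `d → x → y → d`
of even vertices of the hexagon gives two linear equations in `b₁`, `b₁²`; eliminating `b₁`
yields `(d₁ - x₁)(a₁ - w₁)(x₁ - y₁)` times the stated polynomial `= 0`. The three factors are
nonzero since two vertices with equal first coordinate and a common neighbour coincide.
-/

section IsGpAdj

variable {R : Type*} [CommRing R]

def IsGpAdj (u v : R × R × R) : Prop :=
  u.2.1 + v.2.2 = u.1 * v.1 ^ 2 ∧ u.2.2 + v.2.1 = u.1 ^ 2 * v.1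

theorem IsGpAdj.snd_sub_snd {u c v : R × R × R} (huc : IsGpAdj u c) (hcv : IsGpAdj c v) :
    u.2.1 - v.2.1 = c.1 ^ 2 * (u.1 - v.1) ∧ u.2.2 - v.2.2 = c.1 * (u.1 ^ 2 - v.1 ^ 2) :=
  ⟨by linear_combination huc.1 - hcv.2, by linear_combination huc.2 - hcv.1⟩

theorem IsGpAdj.fst_ne {u c v : R × R × R} (huc : IsGpAdj u c) (hcv : IsGpAdj c v)
    (huv : u ≠ v) : u.1 ≠ v.1 := by
  intro h
  obtain ⟨h₂, h₃⟩ := huc.snd_sub_snd hcv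
  rw [h, sub_self, mul_zero, sub_eq_zero] at h₂ h₃
  exact huv (Prod.ext h (Prod.ext h₂ h₃))

theorem IsGpAdj.hexagon_sums {d a x w y b : R × R × R}
    (hda : IsGpAdj d a) (hax : IsGpAdj a x) (hxw : IsGpAdj x w)
    (hwy : IsGpAdj w y) (hyb : IsGpAdj y b) (hbd : IsGpAdj b d) :
    a.1 ^ 2 * (d.1 - x.1) + w.1 ^ 2 * (x.1 - y.1) + b.1 ^ 2 * (y.1 - d.1) = 0 ∧
      a.1 * (d.1 ^ 2 - x.1 ^ 2) + w.1 * (x.1 ^ 2 - y.1 ^ 2) + b.1 * (y.1 ^ 2 - d.1 ^ 2) = 0 := by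
  obtain ⟨hdx₂, hdx₃⟩ := hda.snd_sub_snd hax
  obtain ⟨hxy₂, hxy₃⟩ := hxw.snd_sub_snd hwy
  obtain ⟨hyd₂, hyd₃⟩ := hyb.snd_sub_snd hbd
  exact ⟨by linear_combination -hdx₂ - hxy₂ - hyd₂, by linear_combination -hdx₃ - hxy₃ - hyd₃⟩

end IsGpAdj

theorem hexagon_poly_eq_zero {R : Type*} [CommRing R] [IsDomain R] {d a x w y b : R}
    (hdx : d ≠ x) (haw : a ≠ w) (hxy : x ≠ y)
    (hsq : a ^ 2 * (d - x) + w ^ 2 * (x - y) + b ^ 2 * (y - d) = 0)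
    (hlin : a * (d ^ 2 - x ^ 2) + w * (x ^ 2 - y ^ 2) + b * (y ^ 2 - d ^ 2) = 0) :
    d ^ 2 * a + d ^ 2 * w - d * a * x - d * a * y + d * x * w + d * w * y - a * x ^ 2 -
      a * x * y - a * y ^ 2 + x ^ 2 * w + x * w * y - w * y ^ 2 = 0 := by
  -- `b` is eliminated through `(b (y² - d²))² = b² (y - d) · (y - d)(y + d)²`.
  have key : (d ^ 2 * a + d ^ 2 * w - d * a * x - d * a * y + d * x * w + d * w * y -
      a * x ^ 2 - a * x * y - a * y ^ 2 + x ^ 2 * w + x * w * y - w * y ^ 2) *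
      ((d - x) * (a - w) * (x - y)) = 0 := by
    linear_combination
      (a * (d ^ 2 - x ^ 2) + w * (x ^ 2 - y ^ 2) - b * (y ^ 2 - d ^ 2)) * hlin
        + (y - d) * (y + d) ^ 2 * hsq
  simpa [sub_eq_zero, hdx, haw, hxy] using key

theorem Gp_hexagon_general (p : ℕ) [Fact p.Prime]
    (d a x w y b : Vert p)
    (hdist : [d, a, x, w, y, b].Pairwise (· ≠ ·))
    (eda : (Gp p).Adj d a) (eax : (Gp p).Adj a x) (exw : (Gp p).Adj x w)
    (ewy : (Gp p).Adj w y) (eyb : (Gp p).Adj y b) (ebd : (Gp p).Adj b d) :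
    d.val.1 ^ 2 * a.val.1 + d.val.1 ^ 2 * w.val.1 - d.val.1 * a.val.1 * x.val.1 -
      d.val.1 * a.val.1 * y.val.1 + d.val.1 * x.val.1 * w.val.1 +
      d.val.1 * w.val.1 * y.val.1 - a.val.1 * x.val.1 ^ 2 -
      a.val.1 * x.val.1 * y.val.1 - a.val.1 * y.val.1 ^ 2 + x.val.1 ^ 2 * w.val.1 +
      x.val.1 * w.val.1 * y.val.1 - w.val.1 * y.val.1 ^ 2 = 0 := by
  simp only [List.pairwise_cons, List.mem_cons, List.not_mem_nil, forall_eq_or_imp] at hdist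
  have hda : IsGpAdj d.val a.val := eda.2
  have hax : IsGpAdj a.val x.val := eax.2
  have hxw : IsGpAdj x.val w.val := exw.2
  have hwy : IsGpAdj w.val y.val := ewy.2
  obtain ⟨hsq, hlin⟩ := hda.hexagon_sums hax hxw hwy eyb.2 ebd.2
  refine hexagon_poly_eq_zero ?_ ?_ ?_ hsq hlin
  · exact hda.fst_ne hax (Subtype.coe_ne_coe.mpr hdist.1.2.1)
  · exact hax.fst_ne hxw (Subtype.coe_ne_coe.mpr hdist.2.1.2.1)
  · exact hxw.fst_ne hwy (Subtype.coe_ne_coe.mpr hdist.2.2.1.2.1)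

/-- If pairwise distinct vertices `d, a, x, w, y, b` form a hexagon with edges
`da, ax, xw, wy, yb, bd`, then
`d₁²a₁ + d₁²w₁ − d₁a₁x₁ − d₁a₁y₁ + d₁x₁w₁ + d₁w₁y₁ − a₁x₁² − a₁x₁y₁ − a₁y₁² + x₁²w₁ +
x₁w₁y₁ − w₁y₁² = 0`. -/
theorem Gp_hexagon (p : ℕ) [Fact p.Prime] (h5 : p % 6 = 5) (h11 : 11 < p)
    (d a x w y b : Vert p)
    (hdist : [d, a, x, w, y, b].Pairwise (· ≠ ·))
    (eda : (Gp p).Adj d a) (eax : (Gp p).Adj a x) (exw : (Gp p).Adj x w)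
    (ewy : (Gp p).Adj w y) (eyb : (Gp p).Adj y b) (ebd : (Gp p).Adj b d) :
    d.val.1 ^ 2 * a.val.1 + d.val.1 ^ 2 * w.val.1 - d.val.1 * a.val.1 * x.val.1 -
      d.val.1 * a.val.1 * y.val.1 + d.val.1 * x.val.1 * w.val.1 +
      d.val.1 * w.val.1 * y.val.1 - a.val.1 * x.val.1 ^ 2 -
      a.val.1 * x.val.1 * y.val.1 - a.val.1 * y.val.1 ^ 2 + x.val.1 ^ 2 * w.val.1 +
      x.val.1 * w.val.1 * y.val.1 - w.val.1 * y.val.1 ^ 2 = 0 :=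
  Gp_hexagon_general p d a x w y b hdist eda eax exw ewy eyb ebd
end

section
/- Let p be a prime with p ≡ 5 (mod 6) and p > 11. Let a = (a₁,a₂,a₃), b = (b₁,b₂,b₃), c = (c₁,c₂,c₃) be pairwise distinct vertices of G_p such that a₁, b₁, c₁ are pairwise distinct. Then the number of quadruples (x, y, z, w) of pairwise distinct vertices of G_p such that ax, xw, by, yw, cz, zw are all edges of G_p and the first coordinate of w satisfies w₁ = a₁ + b₁ + c₁ is at most 2. -/
open SimpleGraph

/-!
If `w = (s, u, v)` is joined to `t` by a path `t – x – w`, eliminating `x` from the four edge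
equations gives `(t₃ - v)² = (t₂ - u) (t₁ - s) (t₁ + s)²`, a parabola in `(u, v)`. For
`s = a₁ + b₁ + c₁` and `t ∈ {a, b, c}` the elements of `S` are too small for `t₁ = ± s`, so `v`
determines `u` and then the middle vertex `x`: a quadruple is determined by `w₃`. The vertex `w`
lies on the three parabolas of `a`, `b`, `c`, and two parabolas with different coefficients share
at most two values of `v` (for two common points, `v + v'` is fixed). The three coefficients
cannot agree: `t ↦ (t - s) (t + s)²` is a cubic with `t²`-coefficient `s`, so `a₁, b₁, c₁` would be
the three roots of one of its level sets and `a₁ + b₁ + c₁ = -s`, i.e. `2 s = 0`, which is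
impossible in `S`.
-/

open Set

section Ring

variable {R : Type*} [CommRing R]

def IsEdge (x y : R × R × R) : Prop :=
  x.2.1 + y.2.2 = x.1 * y.1 ^ 2 ∧ x.2.2 + y.2.1 = x.1 ^ 2 * y.1

def parabolaCoeff (t s : R) : R := (t - s) * (t + s) ^ 2

namespace IsEdge

variable {a x w : R × R × R}

theorem fst_mul_sq_sub_sq (h₁ : IsEdge a x) (h₂ : IsEdge x w) :
    x.1 * (a.1 ^ 2 - w.1 ^ 2) = a.2.2 - w.2.2 := by
  linear_combination h₂.1 - h₁.2

theorem sq_sub_eq (h₁ : IsEdge a x) (h₂ : IsEdge x w) :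
    (a.2.2 - w.2.2) ^ 2 = (a.2.1 - w.2.1) * parabolaCoeff a.1 w.1 := by
  have e₁ := fst_mul_sq_sub_sq h₁ h₂
  have e₂ : x.1 ^ 2 * (a.1 - w.1) = a.2.1 - w.2.1 := by linear_combination h₂.2 - h₁.1
  unfold parabolaCoeff
  linear_combination (-(a.2.2 - w.2.2) - x.1 * (a.1 ^ 2 - w.1 ^ 2)) * e₁ +
    (a.1 - w.1) * (a.1 + w.1) ^ 2 * e₂

end IsEdge

variable [IsDomain R]

theorem parabolaCoeff_ne_zero {t s : R} (h : t ^ 2 ≠ s ^ 2) :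
    parabolaCoeff t s ≠ 0 := by
  have hts : t + s ≠ 0 := fun h' => h (by linear_combination (t - s) * h')
  have e : parabolaCoeff t s = (t ^ 2 - s ^ 2) * (t + s) := by unfold parabolaCoeff; ring
  rw [e]
  exact mul_ne_zero (sub_ne_zero.2 h) hts

namespace IsEdge

variable {a x w x' w' : R × R × R}

theorem mid_unique (h : a.1 ^ 2 ≠ w.1 ^ 2) (h₁ : IsEdge a x) (h₂ : IsEdge x w)
    (h₁' : IsEdge a x') (h₂' : IsEdge x' w) : x = x' := by
  have hx : x.1 = x'.1 := mul_right_cancel₀ (sub_ne_zero.2 h)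
    ((fst_mul_sq_sub_sq h₁ h₂).trans (fst_mul_sq_sub_sq h₁' h₂').symm)
  refine Prod.ext hx (Prod.ext ?_ ?_)
  · linear_combination h₂.1 - h₂'.1 + w.1 ^ 2 * hx
  · linear_combination h₁.1 - h₁'.1 + a.1 * (x.1 + x'.1) * hx

theorem end_unique (h : a.1 ^ 2 ≠ w.1 ^ 2)
    (h₁ : IsEdge a x) (h₂ : IsEdge x w) (h₁' : IsEdge a x') (h₂' : IsEdge x' w')
    (hfst : w.1 = w'.1) (hthd : w.2.2 = w'.2.2) : w = w' := by
  have hsq' := h₁'.sq_sub_eq h₂'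
  rw [← hfst, ← hthd] at hsq'
  have hsnd := mul_right_cancel₀ (parabolaCoeff_ne_zero h) ((h₁.sq_sub_eq h₂).symm.trans hsq')
  exact Prod.ext hfst (Prod.ext (by linear_combination -hsnd) hthd)

end IsEdge

theorem add_add_eq_neg_of_cubic_eq {e f a b c : R} (hab : a ≠ b) (hac : a ≠ c) (hbc : b ≠ c)
    (h₁ : a ^ 3 + e * a ^ 2 + f * a = b ^ 3 + e * b ^ 2 + f * b)
    (h₂ : a ^ 3 + e * a ^ 2 + f * a = c ^ 3 + e * c ^ 2 + f * c) :
    a + b + c = -e := by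
  have hb : a ^ 2 + a * b + b ^ 2 + e * (a + b) + f = 0 :=
    (mul_eq_zero.1 (by linear_combination h₁ : (a - b) * _ = 0)).resolve_left (sub_ne_zero.2 hab)
  have hc : a ^ 2 + a * c + c ^ 2 + e * (a + c) + f = 0 :=
    (mul_eq_zero.1 (by linear_combination h₂ : (a - c) * _ = 0)).resolve_left (sub_ne_zero.2 hac)
  have hsum := (mul_eq_zero.1 (by linear_combination hb - hc : (b - c) * (a + b + c + e) = 0))
    |>.resolve_left (sub_ne_zero.2 hbc)
  linear_combination hsum

theorem parabolaCoeff_ne_or_ne {a b c : R} (hab : a ≠ b) (hac : a ≠ c) (hbc : b ≠ c)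
    (h : 2 * (a + b + c) ≠ 0) :
    parabolaCoeff a (a + b + c) ≠ parabolaCoeff b (a + b + c) ∨
      parabolaCoeff a (a + b + c) ≠ parabolaCoeff c (a + b + c) := by
  by_contra! ⟨h₁, h₂⟩
  unfold parabolaCoeff at h₁ h₂
  have hs := add_add_eq_neg_of_cubic_eq (e := a + b + c) (f := -(a + b + c) ^ 2) hab hac hbc
    (by linear_combination h₁) (by linear_combination h₂)
  exact h (by linear_combination hs)

theorem mul_add_eq_of_mem_two_parabolas {α β a₂ a₃ b₂ b₃ u v u' v' : R}
    (ha : (a₃ - v) ^ 2 = (a₂ - u) * α) (hb : (b₃ - v) ^ 2 = (b₂ - u) * β)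
    (ha' : (a₃ - v') ^ 2 = (a₂ - u') * α) (hb' : (b₃ - v') ^ 2 = (b₂ - u') * β) (hv : v ≠ v') :
    (β - α) * (v + v') = 2 * (β * a₃ - α * b₃) :=
  sub_eq_zero.1 <| (mul_eq_zero.1 (by linear_combination β * (ha - ha') - α * (hb - hb') :
    (v - v') * ((β - α) * (v + v') - 2 * (β * a₃ - α * b₃)) = 0)).resolve_left (sub_ne_zero.2 hv)

theorem ncard_le_two_of_mem_two_parabolas {α β a₂ a₃ b₂ b₃ : R} (hαβ : α ≠ β) {V : Set R}
    (hV : ∀ v ∈ V, ∃ u, (a₃ - v) ^ 2 = (a₂ - u) * α ∧ (b₃ - v) ^ 2 = (b₂ - u) * β) :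
    V.ncard ≤ 2 := by
  by_contra! hlt
  obtain ⟨v₀, h₀, v₁, h₁, v₂, h₂, h01, h02, h12⟩ :=
    (two_lt_ncard (finite_of_ncard_pos (by omega))).1 hlt
  obtain ⟨u₀, ha₀, hb₀⟩ := hV v₀ h₀
  obtain ⟨u₁, ha₁, hb₁⟩ := hV v₁ h₁
  obtain ⟨u₂, ha₂, hb₂⟩ := hV v₂ h₂
  have e₁ := mul_add_eq_of_mem_two_parabolas ha₀ hb₀ ha₁ hb₁ h01
  have e₂ := mul_add_eq_of_mem_two_parabolas ha₀ hb₀ ha₂ hb₂ h02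
  exact h12 (add_left_cancel (mul_left_cancel₀ (sub_ne_zero.2 hαβ.symm) (e₁.trans e₂.symm)))

theorem ncard_le_two_of_mem_three_parabolas {α β γ a₂ a₃ b₂ b₃ c₂ c₃ : R}
    (hne : α ≠ β ∨ α ≠ γ) {V : Set R}
    (hV : ∀ v ∈ V, ∃ u, (a₃ - v) ^ 2 = (a₂ - u) * α ∧ (b₃ - v) ^ 2 = (b₂ - u) * β ∧
      (c₃ - v) ^ 2 = (c₂ - u) * γ) :
    V.ncard ≤ 2 := by
  rcases hne with h | h
  · exact ncard_le_two_of_mem_two_parabolas h fun v hv =>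
      let ⟨u, ha, hb, _⟩ := hV v hv; ⟨u, ha, hb⟩
  · exact ncard_le_two_of_mem_two_parabolas h fun v hv =>
      let ⟨u, ha, _, hc⟩ := hV v hv; ⟨u, ha, hc⟩

end Ring

theorem Sset_lincomb_ne_zero {p : ℕ} {a b c : ZMod p} (ha : a ∈ Sset p) (hb : b ∈ Sset p)
    (hc : c ∈ Sset p) (i j k : ℕ) (hpos : 0 < i + j + k) (hle : i + j + k ≤ 6) :
    (i * a + j * b + k * c : ZMod p) ≠ 0 := by
  simp only [Sset, Finset.mem_image, Finset.mem_Icc] at ha hb hc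
  obtain ⟨m, ⟨hm, hm'⟩, rfl⟩ := ha
  obtain ⟨n, ⟨hn, hn'⟩, rfl⟩ := hb
  obtain ⟨l, ⟨hl, hl'⟩, rfl⟩ := hc
  have hd : 6 * ((p - 5) / 6) ≤ p - 5 := Nat.mul_div_le _ _
  have hlt : i * m + j * n + k * l < p := by
    calc i * m + j * n + k * l ≤ i * ((p - 5) / 6) + j * ((p - 5) / 6) + k * ((p - 5) / 6) := by
          gcongr
      _ = (i + j + k) * ((p - 5) / 6) := by ring
      _ ≤ 6 * ((p - 5) / 6) := by gcongr
      _ < p := by omega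
  have hpos' : 0 < i * m + j * n + k * l := by
    calc 0 < i + j + k := hpos
      _ ≤ i * m + j * n + k * l := by gcongr <;> nlinarith
  have hcast : ((i * m + j * n + k * l : ℕ) : ZMod p) ≠ 0 := by
    rw [Ne, ZMod.natCast_eq_zero_iff]
    exact fun hdvd => (Nat.le_of_dvd hpos' hdvd).not_gt hlt
  exact_mod_cast hcast

theorem Sset_sq_ne_sq_add_add {p : ℕ} [Fact p.Prime] {a b c : ZMod p} (ha : a ∈ Sset p)
    (hb : b ∈ Sset p) (hc : c ∈ Sset p) : a ^ 2 ≠ (a + b + c) ^ 2 := by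
  rw [Ne, sq_eq_sq_iff_eq_or_eq_neg, not_or]
  constructor
  · intro h
    exact Sset_lincomb_ne_zero ha hb hc 0 1 1 (by norm_num) (by norm_num)
      (by push_cast; linear_combination -h)
  · intro h
    exact Sset_lincomb_ne_zero ha hb hc 2 1 1 (by norm_num) (by norm_num)
      (by push_cast; linear_combination h)

section QuadSet

variable {p : ℕ} {a b c : Vert p} {q : Vert p × Vert p × Vert p × Vert p}

theorem isEdge_of_mem_QuadSet (hq : q ∈ QuadSet p a b c) :
    IsEdge a.val q.1.val ∧ IsEdge q.1.val q.2.2.2.val ∧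
      IsEdge b.val q.2.1.val ∧ IsEdge q.2.1.val q.2.2.2.val ∧
      IsEdge c.val q.2.2.1.val ∧ IsEdge q.2.2.1.val q.2.2.2.val := by
  obtain ⟨-, -, -, -, -, -, h₁, h₂, h₃, h₄, h₅, h₆⟩ := hq
  exact ⟨h₁.2, h₂.2, h₃.2, h₄.2, h₅.2, h₆.2⟩

theorem sq_sub_eq_of_mem_QuadSet (hq : q ∈ QuadSet p a b c) :
    (a.val.2.2 - q.2.2.2.val.2.2) ^ 2 =
        (a.val.2.1 - q.2.2.2.val.2.1) * parabolaCoeff a.val.1 q.2.2.2.val.1 ∧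
      (b.val.2.2 - q.2.2.2.val.2.2) ^ 2 =
        (b.val.2.1 - q.2.2.2.val.2.1) * parabolaCoeff b.val.1 q.2.2.2.val.1 ∧
      (c.val.2.2 - q.2.2.2.val.2.2) ^ 2 =
        (c.val.2.1 - q.2.2.2.val.2.1) * parabolaCoeff c.val.1 q.2.2.2.val.1 := by
  obtain ⟨h₁, h₂, h₃, h₄, h₅, h₆⟩ := isEdge_of_mem_QuadSet hq
  exact ⟨h₁.sq_sub_eq h₂, h₃.sq_sub_eq h₄, h₅.sq_sub_eq h₆⟩

theorem injOn_thd_of_mem_QuadSet [Fact p.Prime] {s : ZMod p} (ha : a.val.1 ^ 2 ≠ s ^ 2)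
    (hb : b.val.1 ^ 2 ≠ s ^ 2) (hc : c.val.1 ^ 2 ≠ s ^ 2) :
    InjOn (fun q : Vert p × Vert p × Vert p × Vert p => q.2.2.2.val.2.2)
      {q ∈ QuadSet p a b c | q.2.2.2.val.1 = s} := by
  rintro ⟨x, y, z, w⟩ ⟨hq, hw⟩ ⟨x', y', z', w'⟩ ⟨hq', hw'⟩ hthd
  obtain ⟨hax, hxw, hby, hyw, hcz, hzw⟩ := isEdge_of_mem_QuadSet hq
  obtain ⟨hax', hxw', hby', hyw', hcz', hzw'⟩ := isEdge_of_mem_QuadSet hq'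
  dsimp only at hw hw' hthd
  subst hw
  obtain rfl : w = w' := Subtype.ext (hax.end_unique ha hxw hax' hxw' hw'.symm hthd)
  obtain rfl : x = x' := Subtype.ext (hax.mid_unique ha hxw hax' hxw')
  obtain rfl : y = y' := Subtype.ext (hby.mid_unique hb hyw hby' hyw')
  obtain rfl : z = z' := Subtype.ext (hcz.mid_unique hc hzw hcz' hzw')
  rfl

end QuadSet

theorem Gp_quad_count_w_eq_sum_general (p : ℕ) [Fact p.Prime] (a b c : Vert p)
    (h1ab : a.val.1 ≠ b.val.1) (h1ac : a.val.1 ≠ c.val.1) (h1bc : b.val.1 ≠ c.val.1) :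
    {q ∈ QuadSet p a b c | q.2.2.2.val.1 = a.val.1 + b.val.1 + c.val.1}.ncard ≤ 2 := by
  have ha := a.property
  have hb := b.property
  have hc := c.property
  have hsa := Sset_sq_ne_sq_add_add ha hb hc
  have hsb : b.val.1 ^ 2 ≠ (a.val.1 + b.val.1 + c.val.1) ^ 2 := by
    convert Sset_sq_ne_sq_add_add hb ha hc using 2; ring
  have hsc : c.val.1 ^ 2 ≠ (a.val.1 + b.val.1 + c.val.1) ^ 2 := by
    convert Sset_sq_ne_sq_add_add hc ha hb using 2; ring
  have h2s : 2 * (a.val.1 + b.val.1 + c.val.1) ≠ 0 := fun h =>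
    Sset_lincomb_ne_zero ha hb hc 2 2 2 (by norm_num) (by norm_num)
      (by push_cast; linear_combination h)
  rw [← (injOn_thd_of_mem_QuadSet hsa hsb hsc).ncard_image]
  exact ncard_le_two_of_mem_three_parabolas (parabolaCoeff_ne_or_ne h1ab h1ac h1bc h2s)
    (by rintro _ ⟨q, ⟨hq, hw⟩, rfl⟩; rw [← hw]; exact ⟨_, sq_sub_eq_of_mem_QuadSet hq⟩)

/-- If `a₁, b₁, c₁` are pairwise distinct, there are at most 2 such quadruples
`(x, y, z, w)` with `w₁ = a₁ + b₁ + c₁`. -/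
theorem Gp_quad_count_w_eq_sum (p : ℕ) [Fact p.Prime] (h5 : p % 6 = 5) (h11 : 11 < p)
    (a b c : Vert p) (hab : a ≠ b) (hac : a ≠ c) (hbc : b ≠ c)
    (h1ab : a.val.1 ≠ b.val.1) (h1ac : a.val.1 ≠ c.val.1) (h1bc : b.val.1 ≠ c.val.1) :
    {q ∈ QuadSet p a b c | q.2.2.2.val.1 = a.val.1 + b.val.1 + c.val.1}.ncard ≤ 2 :=
  Gp_quad_count_w_eq_sum_general p a b c h1ab h1ac h1bc
end
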